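/- For every standard Young tableau T of skew shape λ/μ with n = |λ/μ| cells, the filling Rot_SE(T) produced by the southeast rotation is again a standard Young tableau of shape λ/μ. -/

import Mathlib

/-!
Common definitions for skew shapes, standard Young tableaux, the southeast
boundary, southeast min-unimodal sets, the southeast rotation `Rot_SE`,
balance, balance points, and the map `Θ`, following the paper.

Cells are pairs `(i, j) : ℕ × ℕ` (row `i` counted from the top, column `j`
counted from the left).  South means larger row index, east means larger
column index.
-/

open scoped Classical

namespace SkewSE

abbrev Cell : Type := ℕ × ℕ

/-- `a` is weakly southwest of `b`: weakly south (row ≥) and weakly west (col ≤). -/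
def weakSW (a b : Cell) : Prop := b.1 ≤ a.1 ∧ a.2 ≤ b.2

/-- `a` is strictly southwest of `b`: strictly south and strictly west. -/
def strictSW (a b : Cell) : Prop := b.1 < a.1 ∧ a.2 < b.2

/-- The (strict) southwest-to-northeast order on cells:
`a` comes before `b` if `a` is weakly southwest of `b` and `a ≠ b`. -/
def swLT (a b : Cell) : Prop := weakSW a b ∧ a ≠ b

/-- Two cells are adjacent if they share an edge. -/
def adjacent (a b : Cell) : Prop :=
  (a.1 = b.1 ∧ (a.2 = b.2 + 1 ∨ b.2 = a.2 + 1)) ∨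
  (a.2 = b.2 ∧ (a.1 = b.1 + 1 ∨ b.1 = a.1 + 1))

/-- `a` and `b` lie in the same connected component of the set of cells `P`
(with respect to edge-adjacency). -/
def sameComp (P : Finset Cell) (a b : Cell) : Prop :=
  a ∈ P ∧ b ∈ P ∧ Relation.ReflTransGen (fun x y => x ∈ P ∧ y ∈ P ∧ adjacent x y) a b

/-- The cells of the skew shape `λ/μ`. -/
def skewCells (lam mu : YoungDiagram) : Finset Cell := lam.cells \ mu.cells

/-- `n = |λ/μ|`, the number of cells. -/
def numCells (lam mu : YoungDiagram) : ℕ := (skewCells lam mu).card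

/-- A set of cells is a skew shape if it is the difference of two Young diagrams. -/
def IsSkewShape (P : Finset Cell) : Prop :=
  ∃ lam' mu' : YoungDiagram, mu' ≤ lam' ∧ P = lam'.cells \ mu'.cells

/-- A standard Young tableau of skew shape `λ/μ`: a bijective filling of the
cells by `{1,…,n}`, strictly increasing west-to-east along rows and
north-to-south down columns.  (Entries are `0` off the shape.) -/
structure SYT (lam mu : YoungDiagram) where
  entry : Cell → ℕ
  bijOn : Set.BijOn entry (skewCells lam mu : Set Cell)
    ((Finset.Icc 1 (numCells lam mu) : Finset ℕ) : Set ℕ)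
  row_lt : ∀ i j : ℕ, (i, j) ∈ skewCells lam mu → (i, j + 1) ∈ skewCells lam mu →
    entry (i, j) < entry (i, j + 1)
  col_lt : ∀ i j : ℕ, (i, j) ∈ skewCells lam mu → (i + 1, j) ∈ skewCells lam mu →
    entry (i, j) < entry (i + 1, j)
  zero_outside : ∀ c : Cell, c ∉ skewCells lam mu → entry c = 0

variable {lam mu : YoungDiagram}

/-- `pos T x` is the cell of `T` containing the entry `x`. -/
noncomputable def pos (T : SYT lam mu) (x : ℕ) : Cell :=
  if h : ∃ c ∈ skewCells lam mu, T.entry c = x then h.choose else (0, 0)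

/-- The southeast boundary of `λ/μ`: cells `(i,j)` with `(i+1, j+1) ∉ λ/μ`. -/
def SEboundary (lam mu : YoungDiagram) : Finset Cell :=
  (skewCells lam mu).filter (fun c => (c.1 + 1, c.2 + 1) ∉ skewCells lam mu)

/-- `S` is southeast min-unimodal in `T`: the cells `pos_T(S)` lie on the
southeast boundary, in a single connected component of `λ/μ`, are totally
ordered southwest-to-northeast, and the entries, read in the
southwest-to-northeast order of their cells, strictly decrease until
reaching `min S` and then strictly increase. -/
def MinUnimodalSE (T : SYT lam mu) (S : Finset ℕ) : Prop :=
  ∃ hne : S.Nonempty,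
    S ⊆ Finset.Icc 1 (numCells lam mu) ∧
    (∀ x ∈ S, pos T x ∈ SEboundary lam mu) ∧
    (∀ x ∈ S, ∀ y ∈ S, sameComp (skewCells lam mu) (pos T x) (pos T y)) ∧
    (∀ x ∈ S, ∀ y ∈ S, weakSW (pos T x) (pos T y) ∨ weakSW (pos T y) (pos T x)) ∧
    (∀ x ∈ S, ∀ y ∈ S, swLT (pos T x) (pos T y) →
      (weakSW (pos T y) (pos T (S.min' hne)) → y < x) ∧
      (weakSW (pos T (S.min' hne)) (pos T x) → x < y))

/-- `k` such that `Rc_SE(T) = {n-k+1, …, n}`: the maximal `k ≥ 1` for which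
this set is southeast min-unimodal in `T`. -/
noncomputable def kSE (T : SYT lam mu) : ℕ :=
  sSup {k : ℕ | 1 ≤ k ∧ k ≤ numCells lam mu ∧
    MinUnimodalSE T (Finset.Icc (numCells lam mu - k + 1) (numCells lam mu))}

/-- `Rc_SE(T) = {n-k+1, …, n}` with `k` maximal as above. -/
noncomputable def RcSE (T : SYT lam mu) : Finset ℕ :=
  Finset.Icc (numCells lam mu - kSE T + 1) (numCells lam mu)

/-- `Rp_SE(T) = pos_T(Rc_SE(T))`. -/
noncomputable def RpSE (T : SYT lam mu) : Finset Cell := (RcSE T).image (pos T)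

/-- `Y = pos_T(min Rc_SE(T))`. -/
noncomputable def Ycell (T : SYT lam mu) : Cell :=
  pos T (numCells lam mu - kSE T + 1)

/-- The position of the largest entry `n`. -/
noncomputable def posN (T : SYT lam mu) : Cell := pos T (numCells lam mu)

/-- `pos_T(n)` is the southwesternmost cell of `Rp_SE(T)`. -/
def SWmostAtN (T : SYT lam mu) : Prop := ∀ c ∈ RpSE T, weakSW (posN T) c

/-- `pos_T(n)` is the northeasternmost cell of `Rp_SE(T)`. -/
def NEmostAtN (T : SYT lam mu) : Prop := ∀ c ∈ RpSE T, weakSW c (posN T)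

/-- The southernmost cell of `P` in the column of `Y`. -/
noncomputable def southEnd (P : Finset Cell) (Y : Cell) : Cell :=
  if h : ∃ c ∈ P, c.2 = Y.2 ∧ ∀ d ∈ P, d.2 = Y.2 → d.1 ≤ c.1 then h.choose else Y

/-- The easternmost cell of `P` in the row of `Y`. -/
noncomputable def eastEnd (P : Finset Cell) (Y : Cell) : Cell :=
  if h : ∃ c ∈ P, c.1 = Y.1 ∧ ∀ d ∈ P, d.1 = Y.1 → d.2 ≤ c.2 then h.choose else Y

/-- The southeast rotation endpoint `X` of `T`. -/
noncomputable def Xend (T : SYT lam mu) : Cell :=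
  if SWmostAtN T then
    if ∃ c ∈ RpSE T, c.2 = (Ycell T).2 ∧ (Ycell T).1 < c.1 then
      southEnd (RpSE T) (Ycell T)
    else eastEnd (RpSE T) (Ycell T)
  else
    if ∃ c ∈ RpSE T, c.1 = (Ycell T).1 ∧ (Ycell T).2 < c.2 then
      eastEnd (RpSE T) (Ycell T)
    else southEnd (RpSE T) (Ycell T)

/-- The cells `Z_1, …, Z_j` of `Rp_SE(T)` lying weakly between `pos_T(n)`
and `X` in the southwest-to-northeast order. -/
noncomputable def chainSE (T : SYT lam mu) : Finset Cell :=
  (RpSE T).filter (fun c =>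
    (weakSW (posN T) c ∧ weakSW c (Xend T)) ∨ (weakSW (Xend T) c ∧ weakSW c (posN T)))

/-- The next cell of `P` after `c` in southwest-to-northeast order. -/
noncomputable def nextNE (P : Finset Cell) (c : Cell) : Cell :=
  if h : ∃ d ∈ P, swLT c d ∧ ∀ e ∈ P, swLT c e → weakSW d e then h.choose else c

/-- The next cell of `P` before `c` in southwest-to-northeast order. -/
noncomputable def nextSW (P : Finset Cell) (c : Cell) : Cell :=
  if h : ∃ d ∈ P, swLT d c ∧ ∀ e ∈ P, swLT e c → weakSW e d then h.choose else c

/-- The filling `Rot_SE(T)` produced by the southeast rotation: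
`n` moves to `X`, and the entries of the cells of `Rp_SE(T)` weakly between
`pos_T(n)` and `X` are each shifted one position towards `pos_T(n)`;
all other entries are unchanged. -/
noncomputable def rotEntry (T : SYT lam mu) (c : Cell) : ℕ :=
  if c ∈ chainSE T then
    if c = Xend T then numCells lam mu
    else if SWmostAtN T then T.entry (nextNE (chainSE T) c)
    else T.entry (nextSW (chainSE T) c)
  else T.entry c

/-- The southeast rotation as a map `SYT(λ/μ) → SYT(λ/μ)`
(well-defined since the rotated filling is again standard). -/
noncomputable def RotSE (T : SYT lam mu) : SYT lam mu :=
  if h : ∃ R : SYT lam mu, R.entry = rotEntry T then h.choose else T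

/-- The descent set `Des(T) = {i : pos_T(i+1) is strictly south of pos_T(i)}`. -/
noncomputable def Des (T : SYT lam mu) : Finset ℕ :=
  (Finset.Icc 1 (numCells lam mu - 1)).filter
    (fun i => (pos T i).1 < (pos T (i + 1)).1)

/-- `S` is balanced with respect to `W` in `U`: the entries in the cells of
`pos_U(S)` weakly northeast of `W` increase from southwest to northeast, and
the entries in the cells of `pos_U(S)` weakly southwest of `W` increase from
northeast to southwest. -/
def Balanced (U : SYT lam mu) (S : Finset ℕ) (W : Cell) : Prop :=
  (∀ x ∈ S, ∀ y ∈ S, weakSW W (pos U x) → weakSW W (pos U y) →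
    swLT (pos U x) (pos U y) → x < y) ∧
  (∀ x ∈ S, ∀ y ∈ S, weakSW (pos U x) W → weakSW (pos U y) W →
    swLT (pos U y) (pos U x) → x < y)

/-- `a` and `b` are distinct and consecutive in the southwest-to-northeast
order on the set of cells `Q`. -/
def consecutiveIn (Q : Finset Cell) (a b : Cell) : Prop :=
  a ∈ Q ∧ b ∈ Q ∧ (swLT a b ∨ swLT b a) ∧
  ∀ c ∈ Q, ¬ (swLT a c ∧ swLT c b) ∧ ¬ (swLT b c ∧ swLT c a)

/-- The northern balance point of a southeast exterior corner `Z`: the cell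
of the southeast boundary weakly due north of `Z` farthest from `Z`. -/
noncomputable def northBP (lam mu : YoungDiagram) (Z : Cell) : Cell :=
  if h : ∃ c ∈ SEboundary lam mu, c.2 = Z.2 ∧ c.1 ≤ Z.1 ∧
      ∀ d ∈ SEboundary lam mu, d.2 = Z.2 → d.1 ≤ Z.1 → c.1 ≤ d.1
  then h.choose else Z

/-- The western balance point of a southeast exterior corner `Z`: the cell
of the southeast boundary weakly due west of `Z` farthest from `Z`. -/
noncomputable def westBP (lam mu : YoungDiagram) (Z : Cell) : Cell :=
  if h : ∃ c ∈ SEboundary lam mu, c.1 = Z.1 ∧ c.2 ≤ Z.2 ∧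
      ∀ d ∈ SEboundary lam mu, d.1 = Z.1 → d.2 ≤ Z.2 → c.2 ≤ d.2
  then h.choose else Z

/-- Property (i) for `S = {n-1, …, n-k+1}` in `R`:
`S` is southeast min-unimodal in `R` and lies in the same connected
component of `λ/μ` as `pos_R(n)` (vacuous when `S` is empty, i.e. `k = 1`). -/
def PropI (R : SYT lam mu) (k : ℕ) : Prop :=
  (Finset.Icc (numCells lam mu - k + 1) (numCells lam mu - 1)).Nonempty →
    MinUnimodalSE R (Finset.Icc (numCells lam mu - k + 1) (numCells lam mu - 1)) ∧
    ∀ x ∈ Finset.Icc (numCells lam mu - k + 1) (numCells lam mu - 1),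
      sameComp (skewCells lam mu) (pos R x) (pos R (numCells lam mu))

/-- `pos_R(S)` contains the northern neighbor of `pos_R(n)`,
for `S = {n-1, …, n-k+1}`. -/
def hasNorthNbr (R : SYT lam mu) (k : ℕ) : Prop :=
  ∃ x ∈ Finset.Icc (numCells lam mu - k + 1) (numCells lam mu - 1),
    (pos R x).2 = (pos R (numCells lam mu)).2 ∧
    (pos R x).1 + 1 = (pos R (numCells lam mu)).1

/-- `pos_R(S)` contains the western neighbor of `pos_R(n)`,
for `S = {n-1, …, n-k+1}`. -/
def hasWestNbr (R : SYT lam mu) (k : ℕ) : Prop :=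
  ∃ x ∈ Finset.Icc (numCells lam mu - k + 1) (numCells lam mu - 1),
    (pos R x).1 = (pos R (numCells lam mu)).1 ∧
    (pos R x).2 + 1 = (pos R (numCells lam mu)).2

/-- Property (ii) for `S = {n-1, …, n-k+1}` in `R`. -/
def PropII (R : SYT lam mu) (k : ℕ) : Prop :=
  ¬ (hasNorthNbr R k ∧ hasWestNbr R k) ∧
  (hasNorthNbr R k →
    Balanced R (Finset.Icc (numCells lam mu - k + 1) (numCells lam mu - 1))
      (northBP lam mu (pos R (numCells lam mu)))) ∧
  (hasWestNbr R k →
    Balanced R (Finset.Icc (numCells lam mu - k + 1) (numCells lam mu - 1))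
      (westBP lam mu (pos R (numCells lam mu)))) ∧
  (¬ hasNorthNbr R k → ¬ hasWestNbr R k →
    Balanced R (Finset.Icc (numCells lam mu - k + 1) (numCells lam mu - 1))
      (northBP lam mu (pos R (numCells lam mu))) ∧
    Balanced R (Finset.Icc (numCells lam mu - k + 1) (numCells lam mu - 1))
      (westBP lam mu (pos R (numCells lam mu))))

/-- The maximal `k` such that `S = {n-1, …, n-k+1}` satisfies properties
(i) and (ii) in `R`; used to define `Θ`. -/
noncomputable def kTheta (R : SYT lam mu) : ℕ :=
  sSup {k : ℕ | 1 ≤ k ∧ k ≤ numCells lam mu ∧ PropI R k ∧ PropII R k}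

/-- The southwesternmost cell of `P`. -/
noncomputable def SWend (P : Finset Cell) : Cell :=
  if h : ∃ c ∈ P, ∀ d ∈ P, weakSW c d then h.choose else (0, 0)

/-- The northeasternmost cell of `P`. -/
noncomputable def NEend (P : Finset Cell) : Cell :=
  if h : ∃ c ∈ P, ∀ d ∈ P, weakSW d c then h.choose else (0, 0)

/-- `P = pos_R({n, …, n-k+1})` for `k = kTheta R`. -/
noncomputable def PTheta (R : SYT lam mu) : Finset Cell :=
  (Finset.Icc (numCells lam mu - kTheta R + 1) (numCells lam mu)).image (pos R)

/-- `pos_R(n - k + 1)` for `k = kTheta R`. -/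
noncomputable def posMTheta (R : SYT lam mu) : Cell :=
  pos R (numCells lam mu - kTheta R + 1)

/-- `Θ` moves `n` to the southwestern end exactly when: `pos_R(n)` and
`pos_R(n-k+1)` lie in different connected components of `P` and
`pos_R(n-k+1)` is on the southwestern side, or they lie in the same
connected component and `pos_R(n-k+1)` is on the northeastern side. -/
def destIsSW (R : SYT lam mu) : Prop :=
  weakSW (posMTheta R) (posN R) ↔ ¬ sameComp (PTheta R) (posN R) (posMTheta R)

/-- The destination cell for `n` under `Θ`. -/
noncomputable def destTheta (R : SYT lam mu) : Cell :=
  if destIsSW R then SWend (PTheta R) else NEend (PTheta R)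

/-- The cells of `P` weakly between the destination cell and `pos_R(n)`. -/
noncomputable def chainTheta (R : SYT lam mu) : Finset Cell :=
  (PTheta R).filter (fun c =>
    (weakSW (destTheta R) c ∧ weakSW c (posN R)) ∨
    (weakSW (posN R) c ∧ weakSW c (destTheta R)))

/-- The filling `Θ(R)`: `n` moves from `pos_R(n)` to the destination cell,
and each entry occupying a cell of `P` strictly between them is shifted one
position in `P` closer to `pos_R(n)`; all other entries are unchanged. -/
noncomputable def thetaEntry (R : SYT lam mu) (c : Cell) : ℕ :=
  if c ∈ chainTheta R then
    if c = destTheta R then numCells lam mu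
    else if destIsSW R then R.entry (nextSW (chainTheta R) c)
    else R.entry (nextNE (chainTheta R) c)
  else R.entry c

/-- The map `Θ` as a map on standard Young tableaux. -/
noncomputable def Theta (R : SYT lam mu) : SYT lam mu :=
  if h : ∃ U : SYT lam mu, U.entry = thetaEntry R then h.choose else R

/-- A single-column rectangle with northern endpoint `Y` and southern endpoint `X`. -/
def IsColSeg (P : Finset Cell) (Y X : Cell) : Prop :=
  Y.2 = X.2 ∧ Y.1 ≤ X.1 ∧ P = (Finset.Icc Y.1 X.1).image (fun i => (i, Y.2))

/-- A single-row rectangle with western endpoint `Y` and eastern endpoint `X`. -/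
def IsRowSeg (P : Finset Cell) (Y X : Cell) : Prop :=
  Y.1 = X.1 ∧ Y.2 ≤ X.2 ∧ P = (Finset.Icc Y.2 X.2).image (fun j => (Y.1, j))

/-- A hook with northwestern corner `Y`, southern endpoint `A`, and eastern
endpoint `B` (both arms of positive length). -/
def IsHook (P : Finset Cell) (Y A B : Cell) : Prop :=
  A.2 = Y.2 ∧ Y.1 < A.1 ∧ B.1 = Y.1 ∧ Y.2 < B.2 ∧
  P = (Finset.Icc Y.1 A.1).image (fun i => (i, Y.2)) ∪
      (Finset.Icc Y.2 B.2).image (fun j => (Y.1, j))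

end SkewSE

namespace SkewSE


/-! ### Auxiliary lemmas for the proof -/

open Finset

variable {lam mu : YoungDiagram}

lemma weakSW_refl (a : Cell) : weakSW a a := ⟨le_rfl, le_rfl⟩

lemma weakSW_antisymm {a b : Cell} (h1 : weakSW a b) (h2 : weakSW b a) : a = b := by
  obtain ⟨a1, a2⟩ := a; obtain ⟨b1, b2⟩ := b
  simp only [weakSW] at h1 h2
  simp only [Prod.mk.injEq]; omega

lemma skew_upright {i j : ℕ} (h1 : (i, j) ∈ skewCells lam mu)
    (h2 : (i + 1, j + 1) ∈ skewCells lam mu) : (i, j + 1) ∈ skewCells lam mu := by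
  simp only [skewCells, Finset.mem_sdiff, YoungDiagram.mem_cells] at h1 h2 ⊢
  exact ⟨lam.up_left_mem (Nat.le_succ i) le_rfl h2.1,
    fun hmem => h1.2 (mu.up_left_mem le_rfl (Nat.le_succ j) hmem)⟩

lemma entry_mem (T : SYT lam mu) {c : Cell} (hc : c ∈ skewCells lam mu) :
    1 ≤ T.entry c ∧ T.entry c ≤ numCells lam mu := by
  have := T.bijOn.mapsTo hc
  simpa [Finset.mem_Icc] using this

lemma pos_spec (T : SYT lam mu) {x : ℕ} (h1 : 1 ≤ x) (h2 : x ≤ numCells lam mu) :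
    pos T x ∈ skewCells lam mu ∧ T.entry (pos T x) = x := by
  have hx : x ∈ ((Finset.Icc 1 (numCells lam mu) : Finset ℕ) : Set ℕ) := by
    simp [Finset.mem_Icc, h1, h2]
  obtain ⟨c, hc, hcx⟩ := T.bijOn.surjOn hx
  have h : ∃ c ∈ skewCells lam mu, T.entry c = x := ⟨c, hc, hcx⟩
  rw [pos, dif_pos h]
  exact ⟨h.choose_spec.1, h.choose_spec.2⟩

lemma pos_entry (T : SYT lam mu) {c : Cell} (hc : c ∈ skewCells lam mu) :
    pos T (T.entry c) = c := by
  obtain ⟨h1, h2⟩ := entry_mem T hc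
  obtain ⟨hm, he⟩ := pos_spec T h1 h2
  exact T.bijOn.injOn hm hc he

lemma entry_inj (T : SYT lam mu) {c c' : Cell} (hc : c ∈ skewCells lam mu)
    (hc' : c' ∈ skewCells lam mu) (h : T.entry c = T.entry c') : c = c' :=
  T.bijOn.injOn hc hc' h

/-- Any east or south neighbour (inside the shape) of a cell of the shape. -/
lemma entry_lt_nbr (T : SYT lam mu) {c c' : Cell} (hc : c ∈ skewCells lam mu)
    (hc' : c' ∈ skewCells lam mu)
    (hnb : c' = (c.1, c.2 + 1) ∨ c' = (c.1 + 1, c.2)) :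
    T.entry c < T.entry c' := by
  obtain ⟨i, j⟩ := c
  rcases hnb with h | h <;> subst h
  · exact T.row_lt i j hc hc'
  · exact T.col_lt i j hc hc'

lemma posN_boundary (T : SYT lam mu) (hn : 1 ≤ numCells lam mu) :
    pos T (numCells lam mu) ∈ SEboundary lam mu := by
  obtain ⟨hm, he⟩ := pos_spec T hn le_rfl
  rw [SEboundary, Finset.mem_filter]
  refine ⟨hm, fun hcon => ?_⟩
  have hup : ((pos T (numCells lam mu)).1, (pos T (numCells lam mu)).2 + 1)
      ∈ skewCells lam mu :=
    skew_upright (by simpa using hm) hcon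
  have h1 := T.row_lt (pos T (numCells lam mu)).1 (pos T (numCells lam mu)).2
    (by simpa using hm) hup
  have h2 := T.col_lt (pos T (numCells lam mu)).1 ((pos T (numCells lam mu)).2 + 1) hup hcon
  have h3 := (entry_mem T hcon).2
  simp only [Prod.mk.eta] at h1
  omega

/-- `kSE` belongs to its defining set when the shape is nonempty. -/
lemma kSE_spec (T : SYT lam mu) (hn : 1 ≤ numCells lam mu) :
    1 ≤ kSE T ∧ kSE T ≤ numCells lam mu ∧ MinUnimodalSE T (RcSE T) := by
  set n := numCells lam mu with hn'
  have h1 : (1 : ℕ) ∈ {k : ℕ | 1 ≤ k ∧ k ≤ n ∧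
      MinUnimodalSE T (Finset.Icc (n - k + 1) n)} := by
    refine ⟨le_rfl, hn, ?_⟩
    have hIcc : n - 1 + 1 = n := by omega
    rw [hIcc]
    have hnn : ∀ x ∈ Finset.Icc n n, x = n := by
      intro x hx; simp only [Finset.mem_Icc] at hx; omega
    refine ⟨⟨n, by simp⟩, ?_, ?_, ?_, ?_, ?_⟩
    · intro x hx; have := hnn x hx; simp only [Finset.mem_Icc]; omega
    · intro x hx; rw [hnn x hx]; exact posN_boundary T hn
    · intro x hx y hy; rw [hnn x hx, hnn y hy]
      have := (pos_spec T hn (le_rfl : n ≤ n)).1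
      exact ⟨this, this, Relation.ReflTransGen.refl⟩
    · intro x hx y hy; rw [hnn x hx, hnn y hy]; exact Or.inl (weakSW_refl _)
    · intro x hx y hy hlt
      rw [hnn x hx, hnn y hy] at hlt
      exact absurd rfl hlt.2
  have hbdd : BddAbove {k : ℕ | 1 ≤ k ∧ k ≤ n ∧
      MinUnimodalSE T (Finset.Icc (n - k + 1) n)} :=
    ⟨n, fun k hk => hk.2.1⟩
  have hmem := Nat.sSup_mem ⟨1, h1⟩ hbdd
  exact ⟨hmem.1, hmem.2.1, hmem.2.2⟩

lemma mem_RpSE (T : SYT lam mu) {c : Cell} :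
    c ∈ RpSE T ↔ c ∈ skewCells lam mu ∧
      numCells lam mu - kSE T + 1 ≤ T.entry c := by
  constructor
  · rintro hc
    obtain ⟨x, hx, rfl⟩ := Finset.mem_image.mp hc
    simp only [RcSE, Finset.mem_Icc] at hx
    have h1 : 1 ≤ x := by omega
    obtain ⟨hm, he⟩ := pos_spec T h1 hx.2
    exact ⟨hm, by omega⟩
  · rintro ⟨hc, hge⟩
    refine Finset.mem_image.mpr ⟨T.entry c, ?_, pos_entry T hc⟩
    simp only [RcSE, Finset.mem_Icc]
    exact ⟨hge, (entry_mem T hc).2⟩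

lemma RpSE_subset (T : SYT lam mu) : ∀ c ∈ RpSE T, c ∈ skewCells lam mu :=
  fun _ hc => ((mem_RpSE T).mp hc).1

lemma Rp_nbr (T : SYT lam mu) {c c' : Cell} (hc : c ∈ RpSE T)
    (hc' : c' ∈ skewCells lam mu)
    (hnb : c' = (c.1, c.2 + 1) ∨ c' = (c.1 + 1, c.2)) : c' ∈ RpSE T := by
  obtain ⟨hcs, hcm⟩ := (mem_RpSE T).mp hc
  have := entry_lt_nbr T hcs hc' hnb
  exact (mem_RpSE T).mpr ⟨hc', by omega⟩

section Unimodal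

variable (T : SYT lam mu)

lemma Ycell_spec (hn : 1 ≤ numCells lam mu) :
    Ycell T ∈ skewCells lam mu ∧
      T.entry (Ycell T) = numCells lam mu - kSE T + 1 ∧ Ycell T ∈ RpSE T := by
  obtain ⟨hk1, hk2, _⟩ := kSE_spec T hn
  have h1 : 1 ≤ numCells lam mu - kSE T + 1 := by omega
  have h2 : numCells lam mu - kSE T + 1 ≤ numCells lam mu := by omega
  obtain ⟨hm, he⟩ := pos_spec T h1 h2
  rw [Ycell]
  exact ⟨hm, he, (mem_RpSE T).mpr ⟨hm, by omega⟩⟩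

lemma posN_spec (hn : 1 ≤ numCells lam mu) :
    posN T ∈ skewCells lam mu ∧ T.entry (posN T) = numCells lam mu ∧
      posN T ∈ RpSE T := by
  obtain ⟨hk1, hk2, _⟩ := kSE_spec T hn
  obtain ⟨hm, he⟩ := pos_spec T hn le_rfl
  rw [posN]
  exact ⟨hm, he, (mem_RpSE T).mpr ⟨hm, by omega⟩⟩

/-- Comparability and unimodality, in cell form. -/
lemma unim_pkg (hn : 1 ≤ numCells lam mu) :
    (∀ a ∈ RpSE T, ∀ b ∈ RpSE T, weakSW a b ∨ weakSW b a) ∧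
    (∀ a ∈ RpSE T, ∀ b ∈ RpSE T, swLT a b → weakSW b (Ycell T) →
      T.entry b < T.entry a) ∧
    (∀ a ∈ RpSE T, ∀ b ∈ RpSE T, swLT a b → weakSW (Ycell T) a →
      T.entry a < T.entry b) := by
  obtain ⟨hk1, hk2, hmu⟩ := kSE_spec T hn
  obtain ⟨hne, hsub, _, _, hcomp, huni⟩ := hmu
  set n := numCells lam mu
  set m := n - kSE T + 1 with hm
  have hmn : m ≤ n := by omega
  have hmin : (RcSE T).min' hne = m := by
    apply le_antisymm
    · exact Finset.min'_le _ _ (by simp only [RcSE, Finset.mem_Icc]; exact ⟨le_rfl, hmn⟩)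
    · apply Finset.le_min'
      intro y hy
      simp only [RcSE, Finset.mem_Icc] at hy
      exact hy.1
  have hmem : ∀ a ∈ RpSE T, T.entry a ∈ RcSE T ∧ pos T (T.entry a) = a := by
    intro a ha
    obtain ⟨has, ham⟩ := (mem_RpSE T).mp ha
    exact ⟨by simp [RcSE, Finset.mem_Icc, ham, (entry_mem T has).2],
      pos_entry T has⟩
  have hY : pos T ((RcSE T).min' hne) = Ycell T := by rw [hmin]; rfl
  refine ⟨?_, ?_, ?_⟩
  · intro a ha b hb
    obtain ⟨ha1, ha2⟩ := hmem a ha; obtain ⟨hb1, hb2⟩ := hmem b hb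
    have := hcomp _ ha1 _ hb1
    rwa [ha2, hb2] at this
  · intro a ha b hb hlt hw
    obtain ⟨ha1, ha2⟩ := hmem a ha; obtain ⟨hb1, hb2⟩ := hmem b hb
    have := (huni _ ha1 _ hb1 (by rwa [ha2, hb2])).1
    rw [hb2, hY] at this
    exact this hw
  · intro a ha b hb hlt hw
    obtain ⟨ha1, ha2⟩ := hmem a ha; obtain ⟨hb1, hb2⟩ := hmem b hb
    have := (huni _ ha1 _ hb1 (by rwa [ha2, hb2])).2
    rw [ha2, hY] at this
    exact this hw

end Unimodal

lemma exists_sw_min (P : Finset Cell) (hne : P.Nonempty)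
    (hcomp : ∀ a ∈ P, ∀ b ∈ P, weakSW a b ∨ weakSW b a) :
    ∃ d ∈ P, ∀ e ∈ P, weakSW d e := by
  obtain ⟨d, hd, hmin⟩ := P.exists_min_image (fun c => (c.2 : ℤ) - (c.1 : ℤ)) hne
  refine ⟨d, hd, fun e he => ?_⟩
  rcases hcomp d hd e he with h | h
  · exact h
  · have h2 := hmin e he
    obtain ⟨h3, h4⟩ := h
    exact ⟨by omega, by omega⟩

lemma exists_sw_max (P : Finset Cell) (hne : P.Nonempty)
    (hcomp : ∀ a ∈ P, ∀ b ∈ P, weakSW a b ∨ weakSW b a) :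
    ∃ d ∈ P, ∀ e ∈ P, weakSW e d := by
  obtain ⟨d, hd, hmax⟩ := P.exists_max_image (fun c => (c.2 : ℤ) - (c.1 : ℤ)) hne
  refine ⟨d, hd, fun e he => ?_⟩
  rcases hcomp d hd e he with h | h
  · have h2 := hmax e he
    obtain ⟨h3, h4⟩ := h
    exact ⟨by omega, by omega⟩
  · exact h

/-- If `n` is not at the southwestern end of `Rp`, it is at the northeastern
end, and `Y` is weakly southwest of it. -/
lemma NEmost_of_not_SWmost (T : SYT lam mu) (hn : 1 ≤ numCells lam mu)
    (h : ¬ SWmostAtN T) : NEmostAtN T ∧ weakSW (Ycell T) (posN T) := by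
  obtain ⟨hcomp, hdec, hinc⟩ := unim_pkg T hn
  obtain ⟨hNs, hNe, hNr⟩ := posN_spec T hn
  obtain ⟨hYs, hYe, hYr⟩ := Ycell_spec T hn
  have hYN : weakSW (Ycell T) (posN T) := by
    rcases hcomp _ hYr _ hNr with hw | hw
    · exact hw
    · exfalso; apply h
      intro c hc
      rcases hcomp _ hNr _ hc with h1 | h1
      · exact h1
      · by_cases hceq : c = posN T
        · rw [hceq]; exact weakSW_refl _
        · have := hdec _ hc _ hNr ⟨h1, hceq⟩ hw
          have h2 := (entry_mem T (RpSE_subset T c hc)).2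
          omega
  refine ⟨?_, hYN⟩
  intro c hc
  rcases hcomp _ hc _ hNr with h1 | h1
  · exact h1
  · by_cases hceq : posN T = c
    · rw [hceq]; exact weakSW_refl _
    · exfalso
      have := hinc _ hNr _ hc ⟨h1, hceq⟩ hYN
      have h2 := (entry_mem T (RpSE_subset T c hc)).2
      omega


lemma chain_sub_Rp (T : SYT lam mu) : ∀ c ∈ chainSE T, c ∈ RpSE T :=
  fun _ hc => (Finset.mem_filter.mp hc).1

lemma southEnd_spec {P : Finset Cell} {Y : Cell} (hY : Y ∈ P) :
    southEnd P Y ∈ P ∧ (southEnd P Y).2 = Y.2 ∧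
      ∀ d ∈ P, d.2 = Y.2 → d.1 ≤ (southEnd P Y).1 := by
  have hex : ∃ c ∈ P, c.2 = Y.2 ∧ ∀ d ∈ P, d.2 = Y.2 → d.1 ≤ c.1 := by
    obtain ⟨d, hd, hmax⟩ := (P.filter (fun c => c.2 = Y.2)).exists_max_image
      (fun c => c.1) ⟨Y, Finset.mem_filter.mpr ⟨hY, rfl⟩⟩
    simp only [Finset.mem_filter] at hd
    exact ⟨d, hd.1, hd.2, fun e he hey =>
      hmax e (Finset.mem_filter.mpr ⟨he, hey⟩)⟩
  rw [southEnd, dif_pos hex]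
  exact ⟨hex.choose_spec.1, hex.choose_spec.2.1, hex.choose_spec.2.2⟩

lemma eastEnd_spec {P : Finset Cell} {Y : Cell} (hY : Y ∈ P) :
    eastEnd P Y ∈ P ∧ (eastEnd P Y).1 = Y.1 ∧
      ∀ d ∈ P, d.1 = Y.1 → d.2 ≤ (eastEnd P Y).2 := by
  have hex : ∃ c ∈ P, c.1 = Y.1 ∧ ∀ d ∈ P, d.1 = Y.1 → d.2 ≤ c.2 := by
    obtain ⟨d, hd, hmax⟩ := (P.filter (fun c => c.1 = Y.1)).exists_max_image
      (fun c => c.2) ⟨Y, Finset.mem_filter.mpr ⟨hY, rfl⟩⟩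
    simp only [Finset.mem_filter] at hd
    exact ⟨d, hd.1, hd.2, fun e he hey =>
      hmax e (Finset.mem_filter.mpr ⟨he, hey⟩)⟩
  rw [eastEnd, dif_pos hex]
  exact ⟨hex.choose_spec.1, hex.choose_spec.2.1, hex.choose_spec.2.2⟩

lemma rot_not_mem (T : SYT lam mu) {c : Cell} (hc : c ∉ chainSE T) :
    rotEntry T c = T.entry c := by
  rw [rotEntry, if_neg hc]

lemma rot_X (T : SYT lam mu) (hXc : Xend T ∈ chainSE T) :
    rotEntry T (Xend T) = numCells lam mu := by
  rw [rotEntry, if_pos hXc, if_pos rfl]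

lemma rot_chain_A (T : SYT lam mu) (hA : SWmostAtN T) {c : Cell}
    (hc : c ∈ chainSE T) (hcX : c ≠ Xend T) :
    rotEntry T c = T.entry (nextNE (chainSE T) c) := by
  rw [rotEntry, if_pos hc, if_neg hcX, if_pos hA]

lemma rot_chain_B (T : SYT lam mu) (hB : ¬ SWmostAtN T) {c : Cell}
    (hc : c ∈ chainSE T) (hcX : c ≠ Xend T) :
    rotEntry T c = T.entry (nextSW (chainSE T) c) := by
  rw [rotEntry, if_pos hc, if_neg hcX, if_neg hB]

section CaseA

variable (T : SYT lam mu) (hn : 1 ≤ numCells lam mu) (hA : SWmostAtN T)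

include hn hA

lemma Xspec_A :
    Xend T ∈ RpSE T ∧
    (((Xend T).2 = (Ycell T).2 ∧ (Ycell T).1 < (Xend T).1 ∧
        ∀ d ∈ RpSE T, d.2 = (Ycell T).2 → d.1 ≤ (Xend T).1) ∨
     ((Xend T).1 = (Ycell T).1 ∧ (Ycell T).2 ≤ (Xend T).2 ∧
        (∀ d ∈ RpSE T, d.1 = (Ycell T).1 → d.2 ≤ (Xend T).2) ∧
        ¬ ∃ d ∈ RpSE T, d.2 = (Ycell T).2 ∧ (Ycell T).1 < d.1)) := by
  have hYr := (Ycell_spec T hn).2.2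
  rw [Xend, if_pos hA]
  by_cases hcol : ∃ c ∈ RpSE T, c.2 = (Ycell T).2 ∧ (Ycell T).1 < c.1
  · rw [if_pos hcol]
    obtain ⟨hs1, hs2, hs3⟩ := southEnd_spec hYr
    obtain ⟨d0, hd0, hd0c, hd0r⟩ := hcol
    exact ⟨hs1, Or.inl ⟨hs2, lt_of_lt_of_le hd0r (hs3 d0 hd0 hd0c), hs3⟩⟩
  · rw [if_neg hcol]
    obtain ⟨hs1, hs2, hs3⟩ := eastEnd_spec hYr
    exact ⟨hs1, Or.inr ⟨hs2, hs3 _ hYr rfl, hs3, hcol⟩⟩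

lemma chainA_iff {c : Cell} :
    c ∈ chainSE T ↔ c ∈ RpSE T ∧ weakSW c (Xend T) := by
  have hX := (Xspec_A T hn hA).1
  rw [chainSE, Finset.mem_filter]
  constructor
  · rintro ⟨hc, h | h⟩
    · exact ⟨hc, h.2⟩
    · have hce : c = posN T := weakSW_antisymm h.2 (hA c hc)
      subst hce; exact ⟨hc, hA _ hX⟩
  · rintro ⟨hc, hw⟩
    exact ⟨hc, Or.inl ⟨hA c hc, hw⟩⟩

lemma X_mem_chain_A : Xend T ∈ chainSE T :=
  (chainA_iff T hn hA).mpr ⟨(Xspec_A T hn hA).1, weakSW_refl _⟩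

lemma posN_mem_chain_A : posN T ∈ chainSE T :=
  (chainA_iff T hn hA).mpr ⟨(posN_spec T hn).2.2, hA _ (Xspec_A T hn hA).1⟩

lemma X_no_nbr_A {c' : Cell} (hc's : c' ∈ skewCells lam mu)
    (hnb : c' = ((Xend T).1, (Xend T).2 + 1) ∨
           c' = ((Xend T).1 + 1, (Xend T).2)) :
    False := by
  obtain ⟨hX, hspec⟩ := Xspec_A T hn hA
  obtain ⟨hcomp, _, _⟩ := unim_pkg T hn
  have hYr := (Ycell_spec T hn).2.2
  have hc' : c' ∈ RpSE T := Rp_nbr T hX hc's hnb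
  have hcmp := hcomp _ hc' _ hYr
  rcases hspec with ⟨h1, h2, h3⟩ | ⟨h1, h2, h3, h4⟩
  · rcases hnb with rfl | rfl
    · simp only [weakSW] at hcmp; omega
    · have h5 := h3 _ hc' h1
      dsimp only at h5; omega
  · rcases hnb with rfl | rfl
    · have h5 := h3 _ hc' h1
      dsimp only at h5; omega
    · simp only [weakSW] at hcmp
      exact h4 ⟨_, hc', by dsimp only; omega, by dsimp only; omega⟩

lemma succA_spec {c : Cell} (hc : c ∈ chainSE T) (hcX : c ≠ Xend T) :
    nextNE (chainSE T) c ∈ chainSE T ∧ swLT c (nextNE (chainSE T) c) ∧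
      ∀ e ∈ chainSE T, swLT c e → weakSW (nextNE (chainSE T) c) e := by
  obtain ⟨hcomp, _, _⟩ := unim_pkg T hn
  have hXc := X_mem_chain_A T hn hA
  have hex : ∃ d ∈ chainSE T, swLT c d ∧
      ∀ e ∈ chainSE T, swLT c e → weakSW d e := by
    have hQne : ((chainSE T).filter (fun d => swLT c d)).Nonempty :=
      ⟨Xend T, Finset.mem_filter.mpr
        ⟨hXc, ((chainA_iff T hn hA).mp hc).2, hcX⟩⟩
    obtain ⟨d, hd, hmin⟩ := exists_sw_min _ hQne (fun a ha b hb =>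
      hcomp _ (chain_sub_Rp T a (Finset.mem_filter.mp ha).1)
        _ (chain_sub_Rp T b (Finset.mem_filter.mp hb).1))
    rw [Finset.mem_filter] at hd
    exact ⟨d, hd.1, hd.2, fun e he hce =>
      hmin e (Finset.mem_filter.mpr ⟨he, hce⟩)⟩
  rw [nextNE, dif_pos hex]
  exact ⟨hex.choose_spec.1, hex.choose_spec.2.1, hex.choose_spec.2.2⟩

lemma succA_ne_posN {c : Cell} (hc : c ∈ chainSE T) (hcX : c ≠ Xend T) :
    nextNE (chainSE T) c ≠ posN T := by
  intro heq
  obtain ⟨hd1, hd2, _⟩ := succA_spec T hn hA hc hcX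
  have h1 : weakSW (posN T) c := hA c (chain_sub_Rp T c hc)
  rw [heq] at hd2
  exact hd2.2 (weakSW_antisymm hd2.1 h1)

lemma succA_adj_E {c c' : Cell} (hc : c ∈ chainSE T) (hc' : c' ∈ chainSE T)
    (hE : c' = (c.1, c.2 + 1)) : nextNE (chainSE T) c = c' := by
  have hcX : c ≠ Xend T := by
    rintro rfl
    exact X_no_nbr_A T hn hA
      (RpSE_subset T _ (chain_sub_Rp T _ hc')) (Or.inl hE)
  obtain ⟨hd1, hd2, hd3⟩ := succA_spec T hn hA hc hcX
  have hcc' : swLT c c' := by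
    subst hE
    exact ⟨⟨le_rfl, Nat.le_succ _⟩, fun h => by
      have := congrArg Prod.snd h; dsimp only at this; omega⟩
  have h4 := hd3 c' hc' hcc'
  obtain ⟨⟨e1, e2⟩, e3⟩ := hd2
  obtain ⟨e4, e5⟩ := h4
  subst hE; dsimp only at e4 e5
  by_cases h : (nextNE (chainSE T) c).2 = c.2
  · exact absurd (Prod.ext_iff.mpr ⟨by omega, by omega⟩ :
      c = nextNE (chainSE T) c) e3
  · exact Prod.ext_iff.mpr ⟨by omega, by omega⟩

lemma succA_adj_S {c c' : Cell} (hc : c ∈ chainSE T) (hc' : c' ∈ chainSE T)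
    (hS : c' = (c.1 + 1, c.2)) (hc'X : c' ≠ Xend T) :
    nextNE (chainSE T) c' = c := by
  obtain ⟨hd1, hd2, hd3⟩ := succA_spec T hn hA hc' hc'X
  have hcc : swLT c' c := by
    subst hS
    exact ⟨⟨Nat.le_succ _, le_rfl⟩, fun h => by
      have := congrArg Prod.fst h; dsimp only at this; omega⟩
  have h4 := hd3 c hc hcc
  obtain ⟨⟨e1, e2⟩, e3⟩ := hd2
  obtain ⟨e4, e5⟩ := h4
  subst hS; dsimp only at e1 e2 e3 ⊢
  by_cases h : (nextNE (chainSE T) (c.1 + 1, c.2)).1 = c.1 + 1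
  · exact absurd (Prod.ext_iff.mpr ⟨by omega, by omega⟩ :
      (c.1 + 1, c.2) = nextNE (chainSE T) (c.1 + 1, c.2)) e3
  · exact Prod.ext_iff.mpr ⟨by omega, by omega⟩

end CaseA

lemma entry_lt_n (T : SYT lam mu) (hn : 1 ≤ numCells lam mu) {e : Cell}
    (hes : e ∈ skewCells lam mu) (hne : e ≠ posN T) :
    T.entry e < numCells lam mu := by
  obtain ⟨hNs, hNe, _⟩ := posN_spec T hn
  have h2 := (entry_mem T hes).2
  rcases eq_or_lt_of_le h2 with h | h
  · exact absurd (entry_inj T hes hNs (by rw [h, hNe])) hne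
  · exact h

lemma hne_Y (T : SYT lam mu) (hn : 1 ≤ numCells lam mu) {e : Cell}
    (her : e ∈ RpSE T) (hney : e ≠ Ycell T) :
    numCells lam mu - kSE T + 1 < T.entry e := by
  obtain ⟨hYs, hYe, _⟩ := Ycell_spec T hn
  obtain ⟨hes, h⟩ := (mem_RpSE T).mp her
  rcases eq_or_lt_of_le h with h | h
  · exact absurd (entry_inj T hes hYs (by rw [← h, hYe])) hney
  · exact h

lemma entry_lt_m (T : SYT lam mu) {e : Cell} (hes : e ∈ skewCells lam mu)
    (her : e ∉ RpSE T) : T.entry e < numCells lam mu - kSE T + 1 := by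
  by_contra h
  exact her ((mem_RpSE T).mpr ⟨hes, by omega⟩)

lemma rotA_main (T : SYT lam mu) (hn : 1 ≤ numCells lam mu) (hA : SWmostAtN T) :
    ∀ c ∈ skewCells lam mu, ∀ c' ∈ skewCells lam mu,
      (c' = (c.1, c.2 + 1) ∨ c' = (c.1 + 1, c.2)) →
      rotEntry T c < rotEntry T c' := by
  obtain ⟨hcomp, hdec, hinc⟩ := unim_pkg T hn
  obtain ⟨hXr, hXspec⟩ := Xspec_A T hn hA
  obtain ⟨hYs, hYe, hYr⟩ := Ycell_spec T hn
  obtain ⟨hNs, hNe, hNr⟩ := posN_spec T hn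
  obtain ⟨hk1, hk2, _⟩ := kSE_spec T hn
  have hXchain := X_mem_chain_A T hn hA
  have hNchain := posN_mem_chain_A T hn hA
  have hmle : ∀ e ∈ RpSE T, numCells lam mu - kSE T + 1 ≤ T.entry e :=
    fun e he => ((mem_RpSE T).mp he).2
  intro c hcs c' hc's hnb
  have hlt : T.entry c < T.entry c' := entry_lt_nbr T hcs hc's hnb
  by_cases hc : c ∈ chainSE T
  · by_cases hc' : c' ∈ chainSE T
    · -- case (iv): both in the chain
      have hcX : c ≠ Xend T := by
        rintro rfl
        exact X_no_nbr_A T hn hA hc's hnb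
      obtain ⟨hs1, hs2, hs3⟩ := succA_spec T hn hA hc hcX
      rcases hnb with hE | hS
      · -- east neighbour
        have hsucc : nextNE (chainSE T) c = c' := succA_adj_E T hn hA hc hc' hE
        rw [rot_chain_A T hA hc hcX, hsucc]
        by_cases hc'X : c' = Xend T
        · have hrw : rotEntry T c' = numCells lam mu := by
            rw [hc'X]; exact rot_X T hXchain
          rw [hrw]
          refine entry_lt_n T hn hc's fun h => ?_
          have h1 := hA c (chain_sub_Rp T c hc)
          rw [← h, hE] at h1
          simp only [weakSW] at h1
          omega
        · rw [rot_chain_A T hA hc' hc'X]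
          obtain ⟨hs1', hs2', hs3'⟩ := succA_spec T hn hA hc' hc'X
          have hswcc' : swLT c c' := by
            subst hE
            exact ⟨⟨le_rfl, Nat.le_succ _⟩, fun h => by
              have := congrArg Prod.snd h; dsimp only at this; omega⟩
          have hYc' : weakSW (Ycell T) c' := by
            rcases hcomp _ (chain_sub_Rp T c' hc') _ hYr with hw | hw
            · exact absurd (hdec _ (chain_sub_Rp T c hc)
                _ (chain_sub_Rp T c' hc') hswcc' hw) (by omega)
            · exact hw
          exact hinc _ (chain_sub_Rp T c' hc')
            _ (chain_sub_Rp T _ hs1') hs2' hYc'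
      · -- south neighbour
        by_cases hc'X : c' = Xend T
        · rw [rot_chain_A T hA hc hcX, hc'X, rot_X T hXchain]
          exact entry_lt_n T hn (RpSE_subset T _ (chain_sub_Rp T _ hs1))
            (succA_ne_posN T hn hA hc hcX)
        · have hpred : nextNE (chainSE T) c' = c := succA_adj_S T hn hA hc hc' hS hc'X
          rw [rot_chain_A T hA hc hcX, rot_chain_A T hA hc' hc'X, hpred]
          -- goal : T.entry (succ c) < T.entry c
          have hswc'c : swLT c' c := by
            subst hS
            exact ⟨⟨Nat.le_succ _, le_rfl⟩, fun h => by
              have := congrArg Prod.fst h; dsimp only at this; omega⟩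
          have hcY : c ≠ Ycell T := by
            rintro rfl
            rcases hXspec with ⟨x1, x2, x3⟩ | ⟨x1, x2, x3, x4⟩
            · obtain ⟨w1, w2⟩ := ((chainA_iff T hn hA).mp hc).2
              omega
            · exact x4 ⟨c', chain_sub_Rp T c' hc', by rw [hS],
                by rw [hS]; dsimp only; omega⟩
          have hcm : numCells lam mu - kSE T + 1 < T.entry c :=
            hne_Y T hn (chain_sub_Rp T c hc) hcY
          by_cases hsY : weakSW (nextNE (chainSE T) c) (Ycell T)
          · exact hdec _ (chain_sub_Rp T c hc) _ (chain_sub_Rp T _ hs1) hs2 hsY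
          · by_cases hsEq : nextNE (chainSE T) c = Ycell T
            · rw [hsEq, hYe]; exact hcm
            · by_cases hYc : weakSW (Ycell T) c
              · exfalso
                have h5 : ¬ weakSW (Ycell T) c' := fun hw => by
                  have := hinc _ (chain_sub_Rp T c' hc')
                    _ (chain_sub_Rp T c hc) hswc'c hw
                  omega
                have h6 : weakSW c' (Ycell T) :=
                  (hcomp _ (chain_sub_Rp T c' hc') _ hYr).resolve_right h5
                obtain ⟨h6a, h6b⟩ := h6
                obtain ⟨hYca, hYcb⟩ := hYc
                subst hS; dsimp only at h6a h6b
                -- Y.2 = c.2, c.1 ≤ Y.1 ≤ c.1 + 1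
                by_cases hY1 : (Ycell T).1 = c.1
                · exact hcY (Prod.ext_iff.mpr ⟨by omega, by omega⟩).symm
                · exact h5 (by exact ⟨by dsimp only; omega, by dsimp only; omega⟩)
              · have hYc2 : weakSW c (Ycell T) :=
                  (hcomp _ (chain_sub_Rp T c hc) _ hYr).resolve_right hYc
                by_cases hYchain : Ycell T ∈ chainSE T
                · exact absurd (hs3 _ hYchain ⟨hYc2, hcY⟩) hsY
                · exfalso
                  have hYsucc : weakSW (Ycell T) (nextNE (chainSE T) c) :=
                    (hcomp _ hYr _ (chain_sub_Rp T _ hs1)).resolve_right hsY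
                  rcases hXspec with ⟨x1, x2, x3⟩ | ⟨x1, x2, x3, x4⟩
                  · obtain ⟨w1, w2⟩ := ((chainA_iff T hn hA).mp hs1).2
                    obtain ⟨w3, w4⟩ := hYsucc
                    omega
                  · exact hYchain ((chainA_iff T hn hA).mpr
                      ⟨hYr, by exact ⟨le_of_eq x1, x2⟩⟩)
    · -- case (iii): c in chain, c' not : impossible
      exfalso
      have hc'r : c' ∈ RpSE T := Rp_nbr T (chain_sub_Rp T c hc) hc's hnb
      have hc'nX : ¬ weakSW c' (Xend T) := fun hw =>
        hc' ((chainA_iff T hn hA).mpr ⟨hc'r, hw⟩)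
      have hXc' : weakSW (Xend T) c' :=
        (hcomp _ hXr _ hc'r).resolve_right hc'nX
      have hcX : weakSW c (Xend T) := ((chainA_iff T hn hA).mp hc).2
      obtain ⟨w1, w2⟩ := hXc'
      obtain ⟨w3, w4⟩ := hcX
      rcases hnb with hE | hS
      · have hXne : Xend T ≠ c' := fun h => hc'nX (h ▸ weakSW_refl _)
        have hXeq : Xend T = c := by
          subst hE; dsimp only at w1 w2
          by_cases hx2 : (Xend T).2 = c.2 + 1
          · exact absurd (Prod.ext_iff.mpr ⟨by omega, hx2⟩) hXne
          · exact Prod.ext_iff.mpr ⟨by omega, by omega⟩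
        exact X_no_nbr_A T hn hA hc's (Or.inl (by rw [hXeq]; exact hE))
      · subst hS; dsimp only at w1 w2; omega
  · by_cases hc' : c' ∈ chainSE T
    · -- case (ii): c not in chain, c' in chain
      rw [rot_not_mem T hc]
      by_cases hc'X : c' = Xend T
      · rw [hc'X, rot_X T hXchain]
        exact entry_lt_n T hn hcs fun h => hc (h ▸ hNchain)
      · rw [rot_chain_A T hA hc' hc'X]
        obtain ⟨hs1', hs2', hs3'⟩ := succA_spec T hn hA hc' hc'X
        have hcnR : c ∉ RpSE T := by
          intro hcr
          have hncX : ¬ weakSW c (Xend T) := fun hw =>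
            hc ((chainA_iff T hn hA).mpr ⟨hcr, hw⟩)
          have hXc : weakSW (Xend T) c :=
            (hcomp _ hXr _ hcr).resolve_right hncX
          have hc'w : weakSW c' (Xend T) := ((chainA_iff T hn hA).mp hc').2
          obtain ⟨w1, w2⟩ := hXc
          obtain ⟨w3, w4⟩ := hc'w
          rcases hnb with hE | hS
          · subst hE; dsimp only at w3 w4
            exact hncX ⟨by omega, by omega⟩
          · subst hS; dsimp only at w3 w4
            by_cases hx1 : (Xend T).1 = c.1
            · exact hncX ⟨by omega, by omega⟩
            · exact hc'X (Prod.ext_iff.mpr ⟨by omega, by omega⟩).symm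
        have h1 : T.entry c < numCells lam mu - kSE T + 1 :=
          entry_lt_m T hcs hcnR
        have h2 := hmle _ (chain_sub_Rp T _ hs1')
        omega
    · -- case (i): neither in the chain
      rw [rot_not_mem T hc, rot_not_mem T hc']
      exact hlt




lemma build_A (T : SYT lam mu) (hn : 1 ≤ numCells lam mu) (hA : SWmostAtN T) :
    ∃ R : SYT lam mu, R.entry = rotEntry T := by
  classical
  have hXchain := X_mem_chain_A T hn hA
  have hNchain := posN_mem_chain_A T hn hA
  obtain ⟨hcomp, _, _⟩ := unim_pkg T hn
  set σ : Cell → Cell := fun c =>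
    if c = Xend T then posN T
    else if c ∈ chainSE T then nextNE (chainSE T) c else c with hσ
  have hEq : ∀ c ∈ skewCells lam mu, rotEntry T c = T.entry (σ c) := by
    intro c hcs
    by_cases hcX : c = Xend T
    · have h1 : σ c = posN T := by rw [hσ]; simp only [if_pos hcX]
      rw [h1, hcX, rot_X T hXchain, (posN_spec T hn).2.1]
    · by_cases hc : c ∈ chainSE T
      · have h1 : σ c = nextNE (chainSE T) c := by
          rw [hσ]; simp only [if_neg hcX, if_pos hc]
        rw [h1, rot_chain_A T hA hc hcX]
      · have h1 : σ c = c := by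
          rw [hσ]; simp only [if_neg hcX, if_neg hc]
        rw [h1, rot_not_mem T hc]
  have hMapsTo : Set.MapsTo σ (skewCells lam mu : Set Cell)
      (skewCells lam mu : Set Cell) := by
    intro c hcs
    rw [Finset.mem_coe] at hcs ⊢
    by_cases hcX : c = Xend T
    · simp only [hσ, if_pos hcX]
      exact Finset.mem_coe.mpr (posN_spec T hn).1
    · by_cases hc : c ∈ chainSE T
      · simp only [hσ, if_neg hcX, if_pos hc]
        exact Finset.mem_coe.mpr (RpSE_subset T _
          (chain_sub_Rp T _ (succA_spec T hn hA hc hcX).1))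
      · simp only [hσ, if_neg hcX, if_neg hc]
        exact hcs
  have hInj : Set.InjOn σ (skewCells lam mu : Set Cell) := by
    have key : ∀ a ∈ chainSE T, ∀ b ∈ chainSE T, a ≠ Xend T → b ≠ Xend T →
        weakSW a b → nextNE (chainSE T) a = nextNE (chainSE T) b → a = b := by
      intro a ha b hb haX hbX hab heq
      by_contra hne
      obtain ⟨ha1, ha2, ha3⟩ := succA_spec T hn hA ha haX
      obtain ⟨hb1, hb2, hb3⟩ := succA_spec T hn hA hb hbX
      have h4 := ha3 b hb ⟨hab, hne⟩
      rw [heq] at h4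
      exact hb2.2 (weakSW_antisymm hb2.1 h4)
    intro a ha b hb heq
    by_cases haX : a = Xend T <;> by_cases hbX : b = Xend T
    · rw [haX, hbX]
    · simp only [hσ, if_pos haX, if_neg hbX] at heq
      by_cases hbC : b ∈ chainSE T
      · rw [if_pos hbC] at heq
        exact absurd heq.symm (succA_ne_posN T hn hA hbC hbX)
      · rw [if_neg hbC] at heq
        exact absurd (heq ▸ hNchain) hbC
    · simp only [hσ, if_neg haX, if_pos hbX] at heq
      by_cases haC : a ∈ chainSE T
      · rw [if_pos haC] at heq
        exact absurd heq (succA_ne_posN T hn hA haC haX)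
      · rw [if_neg haC] at heq
        exact absurd (heq.symm ▸ hNchain) haC
    · simp only [hσ, if_neg haX, if_neg hbX] at heq
      by_cases haC : a ∈ chainSE T <;> by_cases hbC : b ∈ chainSE T
      · rw [if_pos haC, if_pos hbC] at heq
        rcases hcomp _ (chain_sub_Rp T a haC) _ (chain_sub_Rp T b hbC) with hw | hw
        · exact key a haC b hbC haX hbX hw heq
        · exact (key b hbC a haC hbX haX hw heq.symm).symm
      · rw [if_pos haC, if_neg hbC] at heq
        exact absurd (by rw [← heq]; exact (succA_spec T hn hA haC haX).1) hbC
      · rw [if_neg haC, if_pos hbC] at heq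
        exact absurd (by rw [heq]; exact (succA_spec T hn hA hbC hbX).1) haC
      · rw [if_neg haC, if_neg hbC] at heq
        exact heq
  have hBij : Set.BijOn σ (skewCells lam mu : Set Cell)
      (skewCells lam mu : Set Cell) :=
    ((skewCells lam mu).finite_toSet.injOn_iff_bijOn_of_mapsTo hMapsTo).mp hInj
  have hbij2 : Set.BijOn (rotEntry T) (skewCells lam mu : Set Cell)
      ((Finset.Icc 1 (numCells lam mu) : Finset ℕ) : Set ℕ) :=
    (T.bijOn.comp hBij).congr fun c hc => (hEq c (Finset.mem_coe.mp hc)).symm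
  refine ⟨⟨rotEntry T, hbij2, ?_, ?_, ?_⟩, rfl⟩
  · intro i j h1 h2
    exact rotA_main T hn hA (i, j) h1 (i, j + 1) h2 (Or.inl rfl)
  · intro i j h1 h2
    exact rotA_main T hn hA (i, j) h1 (i + 1, j) h2 (Or.inr rfl)
  · intro c hc
    have hcC : c ∉ chainSE T := fun h => hc (RpSE_subset T c (chain_sub_Rp T c h))
    rw [rot_not_mem T hcC]
    exact T.zero_outside c hc

section CaseB

variable (T : SYT lam mu) (hn : 1 ≤ numCells lam mu) (hB : ¬ SWmostAtN T)

include hn hB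

lemma Xspec_B :
    Xend T ∈ RpSE T ∧
    (((Xend T).1 = (Ycell T).1 ∧ (Ycell T).2 < (Xend T).2 ∧
        ∀ d ∈ RpSE T, d.1 = (Ycell T).1 → d.2 ≤ (Xend T).2) ∨
     ((Xend T).2 = (Ycell T).2 ∧ (Ycell T).1 ≤ (Xend T).1 ∧
        (∀ d ∈ RpSE T, d.2 = (Ycell T).2 → d.1 ≤ (Xend T).1) ∧
        ¬ ∃ d ∈ RpSE T, d.1 = (Ycell T).1 ∧ (Ycell T).2 < d.2)) := by
  have hYr := (Ycell_spec T hn).2.2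
  rw [Xend, if_neg hB]
  by_cases hrow : ∃ c ∈ RpSE T, c.1 = (Ycell T).1 ∧ (Ycell T).2 < c.2
  · rw [if_pos hrow]
    obtain ⟨hs1, hs2, hs3⟩ := eastEnd_spec hYr
    obtain ⟨d0, hd0, hd0c, hd0r⟩ := hrow
    exact ⟨hs1, Or.inl ⟨hs2, lt_of_lt_of_le hd0r (hs3 d0 hd0 hd0c), hs3⟩⟩
  · rw [if_neg hrow]
    obtain ⟨hs1, hs2, hs3⟩ := southEnd_spec hYr
    exact ⟨hs1, Or.inr ⟨hs2, hs3 _ hYr rfl, hs3, hrow⟩⟩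

lemma chainB_iff {c : Cell} :
    c ∈ chainSE T ↔ c ∈ RpSE T ∧ weakSW (Xend T) c := by
  have hNE := (NEmost_of_not_SWmost T hn hB).1
  have hX := (Xspec_B T hn hB).1
  rw [chainSE, Finset.mem_filter]
  constructor
  · rintro ⟨hc, h | h⟩
    · have hce : c = posN T := weakSW_antisymm (hNE c hc) h.1
      subst hce; exact ⟨hc, hNE _ hX⟩
    · exact ⟨hc, h.1⟩
  · rintro ⟨hc, hw⟩
    exact ⟨hc, Or.inr ⟨hw, hNE c hc⟩⟩

lemma X_mem_chain_B : Xend T ∈ chainSE T :=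
  (chainB_iff T hn hB).mpr ⟨(Xspec_B T hn hB).1, weakSW_refl _⟩

lemma posN_mem_chain_B : posN T ∈ chainSE T :=
  (chainB_iff T hn hB).mpr ⟨(posN_spec T hn).2.2,
    (NEmost_of_not_SWmost T hn hB).1 _ (Xspec_B T hn hB).1⟩

lemma X_no_nbr_B {c' : Cell} (hc's : c' ∈ skewCells lam mu)
    (hnb : c' = ((Xend T).1, (Xend T).2 + 1) ∨
           c' = ((Xend T).1 + 1, (Xend T).2)) :
    False := by
  obtain ⟨hX, hspec⟩ := Xspec_B T hn hB
  obtain ⟨hcomp, _, _⟩ := unim_pkg T hn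
  have hYr := (Ycell_spec T hn).2.2
  have hc' : c' ∈ RpSE T := Rp_nbr T hX hc's hnb
  have hcmp := hcomp _ hc' _ hYr
  rcases hspec with ⟨h1, h2, h3⟩ | ⟨h1, h2, h3, h4⟩
  · rcases hnb with rfl | rfl
    · have h5 := h3 _ hc' h1
      dsimp only at h5; omega
    · simp only [weakSW] at hcmp; omega
  · rcases hnb with rfl | rfl
    · simp only [weakSW] at hcmp
      by_cases hx : (Xend T).1 = (Ycell T).1
      · exact h4 ⟨_, hc', hx, by dsimp only; omega⟩
      · omega
    · have h5 := h3 _ hc' h1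
      dsimp only at h5; omega

lemma predB_spec {c : Cell} (hc : c ∈ chainSE T) (hcX : c ≠ Xend T) :
    nextSW (chainSE T) c ∈ chainSE T ∧ swLT (nextSW (chainSE T) c) c ∧
      ∀ e ∈ chainSE T, swLT e c → weakSW e (nextSW (chainSE T) c) := by
  obtain ⟨hcomp, _, _⟩ := unim_pkg T hn
  have hXc := X_mem_chain_B T hn hB
  have hex : ∃ d ∈ chainSE T, swLT d c ∧
      ∀ e ∈ chainSE T, swLT e c → weakSW e d := by
    have hQne : ((chainSE T).filter (fun d => swLT d c)).Nonempty :=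
      ⟨Xend T, Finset.mem_filter.mpr
        ⟨hXc, ((chainB_iff T hn hB).mp hc).2, fun h => hcX h.symm⟩⟩
    obtain ⟨d, hd, hmax⟩ := exists_sw_max _ hQne (fun a ha b hb =>
      hcomp _ (chain_sub_Rp T a (Finset.mem_filter.mp ha).1)
        _ (chain_sub_Rp T b (Finset.mem_filter.mp hb).1))
    rw [Finset.mem_filter] at hd
    exact ⟨d, hd.1, hd.2, fun e he hce =>
      hmax e (Finset.mem_filter.mpr ⟨he, hce⟩)⟩
  rw [nextSW, dif_pos hex]
  exact ⟨hex.choose_spec.1, hex.choose_spec.2.1, hex.choose_spec.2.2⟩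

lemma predB_ne_posN {c : Cell} (hc : c ∈ chainSE T) (hcX : c ≠ Xend T) :
    nextSW (chainSE T) c ≠ posN T := by
  intro heq
  obtain ⟨hd1, hd2, _⟩ := predB_spec T hn hB hc hcX
  have h1 : weakSW c (posN T) :=
    (NEmost_of_not_SWmost T hn hB).1 c (chain_sub_Rp T c hc)
  rw [heq] at hd2
  exact hd2.2 (weakSW_antisymm hd2.1 h1)

lemma predB_adj_E {c c' : Cell} (hc : c ∈ chainSE T) (hc' : c' ∈ chainSE T)
    (hE : c' = (c.1, c.2 + 1)) (hc'X : c' ≠ Xend T) :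
    nextSW (chainSE T) c' = c := by
  obtain ⟨hd1, hd2, hd3⟩ := predB_spec T hn hB hc' hc'X
  have hcc' : swLT c c' := by
    subst hE
    exact ⟨⟨le_rfl, Nat.le_succ _⟩, fun h => by
      have := congrArg Prod.snd h; dsimp only at this; omega⟩
  have h4 := hd3 c hc hcc'
  obtain ⟨⟨e1, e2⟩, e3⟩ := hd2
  obtain ⟨e4, e5⟩ := h4
  subst hE; dsimp only at e1 e2 e3 ⊢
  by_cases h : (nextSW (chainSE T) (c.1, c.2 + 1)).2 = c.2 + 1
  · exact absurd (Prod.ext_iff.mpr ⟨by omega, by omega⟩ :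
      nextSW (chainSE T) (c.1, c.2 + 1) = (c.1, c.2 + 1)) e3
  · exact Prod.ext_iff.mpr ⟨by omega, by omega⟩

lemma predB_adj_S {c c' : Cell} (hc : c ∈ chainSE T) (hc' : c' ∈ chainSE T)
    (hS : c' = (c.1 + 1, c.2)) (hcX : c ≠ Xend T) :
    nextSW (chainSE T) c = c' := by
  obtain ⟨hd1, hd2, hd3⟩ := predB_spec T hn hB hc hcX
  have hcc : swLT c' c := by
    subst hS
    exact ⟨⟨Nat.le_succ _, le_rfl⟩, fun h => by
      have := congrArg Prod.fst h; dsimp only at this; omega⟩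
  have h4 := hd3 c' hc' hcc
  obtain ⟨⟨e1, e2⟩, e3⟩ := hd2
  obtain ⟨e4, e5⟩ := h4
  subst hS; dsimp only at e4 e5 ⊢
  by_cases h : (nextSW (chainSE T) c).1 = c.1
  · exact absurd (Prod.ext_iff.mpr ⟨by omega, by omega⟩ :
      nextSW (chainSE T) c = c) e3
  · exact Prod.ext_iff.mpr ⟨by omega, by omega⟩

lemma rotB_main :
    ∀ c ∈ skewCells lam mu, ∀ c' ∈ skewCells lam mu,
      (c' = (c.1, c.2 + 1) ∨ c' = (c.1 + 1, c.2)) →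
      rotEntry T c < rotEntry T c' := by
  obtain ⟨hNE, hYN⟩ := NEmost_of_not_SWmost T hn hB
  obtain ⟨hcomp, hdec, hinc⟩ := unim_pkg T hn
  obtain ⟨hXr, hXspec⟩ := Xspec_B T hn hB
  obtain ⟨hYs, hYe, hYr⟩ := Ycell_spec T hn
  obtain ⟨hNs, hNe, hNr⟩ := posN_spec T hn
  have hXchain := X_mem_chain_B T hn hB
  have hNchain := posN_mem_chain_B T hn hB
  have hmle : ∀ e ∈ RpSE T, numCells lam mu - kSE T + 1 ≤ T.entry e :=
    fun e he => ((mem_RpSE T).mp he).2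
  intro c hcs c' hc's hnb
  have hlt : T.entry c < T.entry c' := entry_lt_nbr T hcs hc's hnb
  by_cases hc : c ∈ chainSE T
  · by_cases hc' : c' ∈ chainSE T
    · have hcX : c ≠ Xend T := by
        rintro rfl
        exact X_no_nbr_B T hn hB hc's hnb
      obtain ⟨hp1, hp2, hp3⟩ := predB_spec T hn hB hc hcX
      rcases hnb with hE | hS
      · rw [rot_chain_B T hB hc hcX]
        by_cases hc'X : c' = Xend T
        · have hrw : rotEntry T c' = numCells lam mu := by
            rw [hc'X]; exact rot_X T hXchain
          rw [hrw]
          exact entry_lt_n T hn (RpSE_subset T _ (chain_sub_Rp T _ hp1))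
            (predB_ne_posN T hn hB hc hcX)
        · have hpred : nextSW (chainSE T) c' = c :=
            predB_adj_E T hn hB hc hc' hE hc'X
          rw [rot_chain_B T hB hc' hc'X, hpred]
          have hswcc' : swLT c c' := by
            subst hE
            exact ⟨⟨le_rfl, Nat.le_succ _⟩, fun h => by
              have := congrArg Prod.snd h; dsimp only at this; omega⟩
          have hcY : c ≠ Ycell T := by
            rintro rfl
            rcases hXspec with ⟨x1, x2, x3⟩ | ⟨x1, x2, x3, x4⟩
            · obtain ⟨w1, w2⟩ := ((chainB_iff T hn hB).mp hc).2
              omega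
            · exact x4 ⟨c', chain_sub_Rp T c' hc', by rw [hE],
                by rw [hE]; dsimp only; omega⟩
          have hcm : numCells lam mu - kSE T + 1 < T.entry c :=
            hne_Y T hn (chain_sub_Rp T c hc) hcY
          by_cases hsY : weakSW (Ycell T) (nextSW (chainSE T) c)
          · exact hinc _ (chain_sub_Rp T _ hp1) _ (chain_sub_Rp T c hc) hp2 hsY
          · by_cases hsEq : nextSW (chainSE T) c = Ycell T
            · rw [hsEq, hYe]; exact hcm
            · by_cases hYc : weakSW c (Ycell T)
              · exfalso
                have h5 : ¬ weakSW c' (Ycell T) := fun hw => by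
                  have := hdec _ (chain_sub_Rp T c hc)
                    _ (chain_sub_Rp T c' hc') hswcc' hw
                  omega
                have h6 : weakSW (Ycell T) c' :=
                  (hcomp _ hYr _ (chain_sub_Rp T c' hc')).resolve_right h5
                obtain ⟨h6a, h6b⟩ := h6
                obtain ⟨ha, hb⟩ := hYc
                subst hE; dsimp only at h6a h6b
                by_cases hY2 : (Ycell T).2 = c.2
                · exact hcY (Prod.ext_iff.mpr ⟨by omega, by omega⟩).symm
                · exact h5 ⟨by dsimp only; omega, by dsimp only; omega⟩
              · have hYc2 : weakSW (Ycell T) c :=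
                  (hcomp _ hYr _ (chain_sub_Rp T c hc)).resolve_right hYc
                by_cases hYchain : Ycell T ∈ chainSE T
                · exact absurd (hp3 _ hYchain ⟨hYc2, fun h => hcY h.symm⟩) hsY
                · exfalso
                  have hpredY : weakSW (nextSW (chainSE T) c) (Ycell T) :=
                    (hcomp _ (chain_sub_Rp T _ hp1) _ hYr).resolve_right hsY
                  rcases hXspec with ⟨x1, x2, x3⟩ | ⟨x1, x2, x3, x4⟩
                  · obtain ⟨w1, w2⟩ := ((chainB_iff T hn hB).mp hp1).2
                    obtain ⟨w3, w4⟩ := hpredY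
                    omega
                  · exact hYchain ((chainB_iff T hn hB).mpr
                      ⟨hYr, ⟨x2, le_of_eq x1⟩⟩)
      · by_cases hc'X : c' = Xend T
        · have hrw : rotEntry T c' = numCells lam mu := by
            rw [hc'X]; exact rot_X T hXchain
          rw [rot_chain_B T hB hc hcX, hrw]
          exact entry_lt_n T hn (RpSE_subset T _ (chain_sub_Rp T _ hp1))
            (predB_ne_posN T hn hB hc hcX)
        · have hpred2 : nextSW (chainSE T) c = c' :=
            predB_adj_S T hn hB hc hc' hS hcX
          rw [rot_chain_B T hB hc hcX, rot_chain_B T hB hc' hc'X, hpred2]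
          obtain ⟨hq1, hq2, hq3⟩ := predB_spec T hn hB hc' hc'X
          have hswc'c : swLT c' c := by
            subst hS
            exact ⟨⟨Nat.le_succ _, le_rfl⟩, fun h => by
              have := congrArg Prod.fst h; dsimp only at this; omega⟩
          have hc'Y : weakSW c' (Ycell T) := by
            rcases hcomp _ (chain_sub_Rp T c' hc') _ hYr with hw | hw
            · exact hw
            · exact absurd (hinc _ (chain_sub_Rp T c' hc')
                _ (chain_sub_Rp T c hc) hswc'c hw) (by omega)
          exact hdec _ (chain_sub_Rp T _ hq1) _ (chain_sub_Rp T c' hc') hq2 hc'Y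
    · exfalso
      have hc'r : c' ∈ RpSE T := Rp_nbr T (chain_sub_Rp T c hc) hc's hnb
      have hc'nX : ¬ weakSW (Xend T) c' := fun hw =>
        hc' ((chainB_iff T hn hB).mpr ⟨hc'r, hw⟩)
      have hc'X : weakSW c' (Xend T) :=
        (hcomp _ hc'r _ hXr).resolve_right hc'nX
      have hXc : weakSW (Xend T) c := ((chainB_iff T hn hB).mp hc).2
      obtain ⟨w1, w2⟩ := hc'X
      obtain ⟨w3, w4⟩ := hXc
      rcases hnb with hE | hS
      · subst hE; dsimp only at w1 w2; omega
      · subst hS; dsimp only at w1 w2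
        by_cases hx1 : (Xend T).1 = c.1
        · have hXeq : Xend T = c := Prod.ext_iff.mpr ⟨hx1, by omega⟩
          exact X_no_nbr_B T hn hB hc's (Or.inr (by rw [hXeq]))
        · refine hc'nX ?_
          have hXeq : Xend T = (c.1 + 1, c.2) := Prod.ext_iff.mpr ⟨by omega, by omega⟩
          rw [hXeq]; exact weakSW_refl _
  · by_cases hc' : c' ∈ chainSE T
    · rw [rot_not_mem T hc]
      by_cases hc'X : c' = Xend T
      · have hrw : rotEntry T c' = numCells lam mu := by
          rw [hc'X]; exact rot_X T hXchain
        rw [hrw]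
        exact entry_lt_n T hn hcs fun h => hc (h ▸ hNchain)
      · rw [rot_chain_B T hB hc' hc'X]
        obtain ⟨hq1, _, _⟩ := predB_spec T hn hB hc' hc'X
        have hcnR : c ∉ RpSE T := by
          intro hcr
          have hncX : ¬ weakSW (Xend T) c := fun hw =>
            hc ((chainB_iff T hn hB).mpr ⟨hcr, hw⟩)
          have hcX2 : weakSW c (Xend T) :=
            (hcomp _ hcr _ hXr).resolve_right hncX
          have hXc' : weakSW (Xend T) c' := ((chainB_iff T hn hB).mp hc').2
          obtain ⟨w1, w2⟩ := hcX2
          obtain ⟨w3, w4⟩ := hXc'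
          rcases hnb with hE | hS
          · subst hE; dsimp only at w3 w4
            by_cases hx2 : (Xend T).2 = c.2
            · refine hncX ?_
              have hXeq : Xend T = c := Prod.ext_iff.mpr ⟨by omega, hx2⟩
              rw [hXeq]; exact weakSW_refl _
            · exact hc'X (Prod.ext_iff.mpr ⟨by omega, by omega⟩).symm
          · subst hS; dsimp only at w3 w4; omega
        have h1 := entry_lt_m T hcs hcnR
        have h2 := hmle _ (chain_sub_Rp T _ hq1)
        omega
    · rw [rot_not_mem T hc, rot_not_mem T hc']
      exact hlt

lemma build_B :
    ∃ R : SYT lam mu, R.entry = rotEntry T := by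
  classical
  have hXchain := X_mem_chain_B T hn hB
  have hNchain := posN_mem_chain_B T hn hB
  obtain ⟨hcomp, _, _⟩ := unim_pkg T hn
  set σ : Cell → Cell := fun c =>
    if c = Xend T then posN T
    else if c ∈ chainSE T then nextSW (chainSE T) c else c with hσ
  have hEq : ∀ c ∈ skewCells lam mu, rotEntry T c = T.entry (σ c) := by
    intro c hcs
    by_cases hcX : c = Xend T
    · have h1 : σ c = posN T := by rw [hσ]; simp only [if_pos hcX]
      rw [h1, hcX, rot_X T hXchain, (posN_spec T hn).2.1]
    · by_cases hc : c ∈ chainSE T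
      · have h1 : σ c = nextSW (chainSE T) c := by
          rw [hσ]; simp only [if_neg hcX, if_pos hc]
        rw [h1, rot_chain_B T hB hc hcX]
      · have h1 : σ c = c := by
          rw [hσ]; simp only [if_neg hcX, if_neg hc]
        rw [h1, rot_not_mem T hc]
  have hMapsTo : Set.MapsTo σ (skewCells lam mu : Set Cell)
      (skewCells lam mu : Set Cell) := by
    intro c hcs
    rw [Finset.mem_coe] at hcs ⊢
    by_cases hcX : c = Xend T
    · simp only [hσ, if_pos hcX]
      exact Finset.mem_coe.mpr (posN_spec T hn).1
    · by_cases hc : c ∈ chainSE T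
      · simp only [hσ, if_neg hcX, if_pos hc]
        exact Finset.mem_coe.mpr (RpSE_subset T _
          (chain_sub_Rp T _ (predB_spec T hn hB hc hcX).1))
      · simp only [hσ, if_neg hcX, if_neg hc]
        exact hcs
  have hInj : Set.InjOn σ (skewCells lam mu : Set Cell) := by
    have key : ∀ a ∈ chainSE T, ∀ b ∈ chainSE T, a ≠ Xend T → b ≠ Xend T →
        weakSW a b → nextSW (chainSE T) a = nextSW (chainSE T) b → a = b := by
      intro a ha b hb haX hbX hab heq
      by_contra hne
      obtain ⟨ha1, ha2, ha3⟩ := predB_spec T hn hB ha haX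
      obtain ⟨hb1, hb2, hb3⟩ := predB_spec T hn hB hb hbX
      have h4 := hb3 a ha ⟨hab, hne⟩
      rw [← heq] at h4
      exact ha2.2 (weakSW_antisymm ha2.1 h4)
    intro a ha b hb heq
    by_cases haX : a = Xend T <;> by_cases hbX : b = Xend T
    · rw [haX, hbX]
    · simp only [hσ, if_pos haX, if_neg hbX] at heq
      by_cases hbC : b ∈ chainSE T
      · rw [if_pos hbC] at heq
        exact absurd heq.symm (predB_ne_posN T hn hB hbC hbX)
      · rw [if_neg hbC] at heq
        exact absurd (heq ▸ hNchain) hbC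
    · simp only [hσ, if_neg haX, if_pos hbX] at heq
      by_cases haC : a ∈ chainSE T
      · rw [if_pos haC] at heq
        exact absurd heq (predB_ne_posN T hn hB haC haX)
      · rw [if_neg haC] at heq
        exact absurd (heq.symm ▸ hNchain) haC
    · simp only [hσ, if_neg haX, if_neg hbX] at heq
      by_cases haC : a ∈ chainSE T <;> by_cases hbC : b ∈ chainSE T
      · rw [if_pos haC, if_pos hbC] at heq
        rcases hcomp _ (chain_sub_Rp T a haC) _ (chain_sub_Rp T b hbC) with hw | hw
        · exact key a haC b hbC haX hbX hw heq
        · exact (key b hbC a haC hbX haX hw heq.symm).symm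
      · rw [if_pos haC, if_neg hbC] at heq
        exact absurd (by rw [← heq]; exact (predB_spec T hn hB haC haX).1) hbC
      · rw [if_neg haC, if_pos hbC] at heq
        exact absurd (by rw [heq]; exact (predB_spec T hn hB hbC hbX).1) haC
      · rw [if_neg haC, if_neg hbC] at heq
        exact heq
  have hBij : Set.BijOn σ (skewCells lam mu : Set Cell)
      (skewCells lam mu : Set Cell) :=
    ((skewCells lam mu).finite_toSet.injOn_iff_bijOn_of_mapsTo hMapsTo).mp hInj
  have hbij2 : Set.BijOn (rotEntry T) (skewCells lam mu : Set Cell)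
      ((Finset.Icc 1 (numCells lam mu) : Finset ℕ) : Set ℕ) :=
    (T.bijOn.comp hBij).congr fun c hc => (hEq c (Finset.mem_coe.mp hc)).symm
  refine ⟨⟨rotEntry T, hbij2, ?_, ?_, ?_⟩, rfl⟩
  · intro i j h1 h2
    exact rotB_main T hn hB (i, j) h1 (i, j + 1) h2 (Or.inl rfl)
  · intro i j h1 h2
    exact rotB_main T hn hB (i, j) h1 (i + 1, j) h2 (Or.inr rfl)
  · intro c hc
    have hcC : c ∉ chainSE T := fun h => hc (RpSE_subset T c (chain_sub_Rp T c h))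
    rw [rot_not_mem T hcC]
    exact T.zero_outside c hc

end CaseB

/-- Lemma `rotse-image-syt`. For any standard Young
tableau `T` of shape `λ/μ`, the filling `Rot_SE(T)` produced by the
southeast rotation is again a standard Young tableau of shape `λ/μ`. -/
theorem rotSE_image_syt (lam mu : YoungDiagram) (hsub : mu ≤ lam)
    (T : SYT lam mu) :
    ∃ R : SYT lam mu, R.entry = rotEntry T := by
  by_cases hn : 1 ≤ numCells lam mu
  · by_cases hA : SWmostAtN T
    · exact build_A T hn hA
    · exact build_B T hn hA
  · refine ⟨T, funext fun c => ?_⟩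
    have hc : c ∉ chainSE T := by
      intro hc
      obtain ⟨hcs, _⟩ := (mem_RpSE T).mp (chain_sub_Rp T c hc)
      have := entry_mem T hcs
      omega
    exact (rot_not_mem T hc).symm

end SkewSE
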